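/- Let U be a finite group with normal abelian subgroup A containing U', G = U/A. Every 1-cocycle f ∈ Z^1(U, A) (for the conjugation action of U on A) gives rise to an endomorphism γ of U defined by γ(x) = f(x)·x, and the subgroup A_γ = U^{γ−1}·U' is the preimage in A of the image of the homomorphism φ : U/U' → A/U' induced by f; moreover (A : A_γ) = (A/U' : Im φ). -/

import Mathlib

/-!
The cocycle identity says precisely that `γ x = f x * x` is multiplicative, and
`γ x * x⁻¹ = f x`, so `A_γ = ⟨f(U)⟩ U'`. As `φ` is induced by `f`, its image is the image of
`⟨f(U)⟩` in `U/U'`, whose preimage is `⟨f(U)⟩ U' ≤ A`; the index formula is then the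
correspondence between subgroups of `U` containing `U'` and subgroups of `U/U'`.
-/

open Subgroup QuotientGroup

def cocycleEndomorphism {G : Type*} [Group G] (f : G → G)
    (hf : ∀ x y : G, f (x * y) = f x * (x * f y * x⁻¹)) : G →* G :=
  MonoidHom.mk' (fun x => f x * x) fun x y => by rw [hf]; group

theorem setOf_cocycleEndomorphism_mul_inv {G : Type*} [Group G] (f : G → G)
    (hf : ∀ x y : G, f (x * y) = f x * (x * f y * x⁻¹)) :
    {z : G | ∃ x : G, z = cocycleEndomorphism f hf x * x⁻¹} = Set.range f := by
  ext z
  simp [cocycleEndomorphism, eq_comm]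

theorem comap_mk'_range_eq_closure_range_sup {G : Type*} [Group G] (N : Subgroup G) [N.Normal]
    (f : G → G) (φ : G ⧸ N →* G ⧸ N) (hφ : ∀ x : G, φ x = f x) :
    comap (mk' N) φ.range = closure (Set.range f) ⊔ N := by
  have hcomp : ⇑φ ∘ mk' N = mk' N ∘ f := funext hφ
  have hrange : φ.range = map (mk' N) (closure (Set.range f)) := by
    rw [MonoidHom.map_closure, ← closure_eq φ.range, MonoidHom.coe_range,
      ← (mk'_surjective N).range_comp, hcomp, Set.range_comp]
  rw [hrange, comap_map_eq, ker_mk']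

theorem cocycle_gives_endomorphism_general
    (U : Type*) [Group U]
    (A : Subgroup U)
    (hUA : commutator U ≤ A)
    (f : U → U) (hfA : ∀ x : U, f x ∈ A)
    (hcocycle : ∀ x y : U, f (x * y) = f x * (x * f y * x⁻¹)) :
    (∀ x y : U, f (x * y) * (x * y) = (f x * x) * (f y * y)) ∧
    ∀ φ : (U ⧸ commutator U) →* (U ⧸ commutator U),
      (∀ x : U, φ (QuotientGroup.mk x) = QuotientGroup.mk (f x)) →
      (Subgroup.closure {z : U | ∃ x : U, z = (f x * x) * x⁻¹} ⊔ commutator U =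
        Subgroup.comap (QuotientGroup.mk' (commutator U)) φ.range ⊓ A) ∧
      Subgroup.relIndex
          (Subgroup.closure {z : U | ∃ x : U, z = (f x * x) * x⁻¹} ⊔ commutator U) A =
        Subgroup.relIndex φ.range (A.map (QuotientGroup.mk' (commutator U))) := by
  refine ⟨map_mul (cocycleEndomorphism f hcocycle), fun φ hφ => ?_⟩
  have hle : closure (Set.range f) ⊔ commutator U ≤ A :=
    sup_le ((closure_le A).mpr (Set.range_subset_iff.mpr hfA)) hUA
  have heq : closure {z : U | ∃ x : U, z = (f x * x) * x⁻¹} ⊔ commutator U =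
      comap (mk' (commutator U)) φ.range ⊓ A := by
    rw [comap_mk'_range_eq_closure_range_sup _ f φ hφ, inf_eq_left.mpr hle]
    exact congrArg (Subgroup.closure · ⊔ commutator U)
      (setOf_cocycleEndomorphism_mul_inv f hcocycle)
  refine ⟨heq, ?_⟩
  rw [heq, inf_relIndex_right, relIndex_comap]

/-- Let `U` be a finite group and `A` a normal abelian subgroup containing `U'`, with
`U` acting on `A` by conjugation. Every 1-cocycle `f ∈ Z¹(U, A)` gives rise to an
endomorphism `γ : x ↦ f(x)·x` of `U`; the subgroup `A_γ = U^{γ−1}·U'` is the preimage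
in `A` of the image of the homomorphism `φ : U/U' → A/U'` induced by `f`, and
`(A : A_γ) = (A/U' : Im φ)`. -/
theorem cocycle_gives_endomorphism
    (U : Type*) [Group U] [Finite U]
    (A : Subgroup U) [A.Normal]
    (hab : ∀ a b : ↥A, a * b = b * a)
    (hUA : commutator U ≤ A)
    (f : U → U) (hfA : ∀ x : U, f x ∈ A)
    (hcocycle : ∀ x y : U, f (x * y) = f x * (x * f y * x⁻¹)) :
    (∀ x y : U, f (x * y) * (x * y) = (f x * x) * (f y * y)) ∧
    ∀ φ : (U ⧸ commutator U) →* (U ⧸ commutator U),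
      (∀ x : U, φ (QuotientGroup.mk x) = QuotientGroup.mk (f x)) →
      (Subgroup.closure {z : U | ∃ x : U, z = (f x * x) * x⁻¹} ⊔ commutator U =
        Subgroup.comap (QuotientGroup.mk' (commutator U)) φ.range ⊓ A) ∧
      Subgroup.relIndex
          (Subgroup.closure {z : U | ∃ x : U, z = (f x * x) * x⁻¹} ⊔ commutator U) A =
        Subgroup.relIndex φ.range (A.map (QuotientGroup.mk' (commutator U))) :=
  cocycle_gives_endomorphism_general U A hUA f hfA hcocycle
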